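/- Let s ≥ 1 be an integer, c_1 < … < c_s be s distinct real numbers, and (A, b) the coefficients of the associated Runge–Kutta collocation method. Assume the method is I-stable and that the polynomial τ(π) has no root on the imaginary axis iℝ. Then the method is Î-stable, i.e. it is I-stable, IS-stable and ISI-stable. -/

import Mathlib

open Polynomial Matrix MeasureTheory

noncomputable section

/-- Lagrange basis function `ℓ_i(t) = ∏_{j≠i} (t - c_j)/(c_i - c_j)`. -/
def lagrangeFun (s : ℕ) (c : Fin s → ℝ) (i : Fin s) (t : ℝ) : ℝ :=
  ∏ j ∈ Finset.univ.erase i, (t - c j) / (c i - c j)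

/-- Coefficient matrix `A` of the collocation method: `a_{ij} = ∫_0^{c_i} ℓ_j`. -/
def collocA (s : ℕ) (c : Fin s → ℝ) : Matrix (Fin s) (Fin s) ℝ :=
  Matrix.of fun i j => ∫ t in (0:ℝ)..(c i), lagrangeFun s c j t

/-- Weight vector `b` of the collocation method: `b_i = ∫_0^1 ℓ_i`. -/
def collocB (s : ℕ) (c : Fin s → ℝ) : Fin s → ℝ :=
  fun i => ∫ t in (0:ℝ)..(1:ℝ), lagrangeFun s c i t

/-- `π = ∏ (X - c_i)`. -/
def piPoly (s : ℕ) (c : Fin s → ℝ) : Polynomial ℝ :=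
  ∏ i : Fin s, (Polynomial.X - Polynomial.C (c i))

/-- The linear map `τ` sending `Σ a_k X^k` to `Σ k! a_k X^k`. -/
def tauP (p : Polynomial ℝ) : Polynomial ℝ :=
  ∑ k ∈ p.support, Polynomial.C ((k.factorial : ℝ) * p.coeff k) * Polynomial.X ^ k

/-- The matrix `A` viewed as a complex matrix. -/
def collocAC (s : ℕ) (c : Fin s → ℝ) : Matrix (Fin s) (Fin s) ℂ :=
  (collocA s c).map (fun x => (x : ℂ))

/-- The weight vector `b` viewed as a complex vector. -/
def collocBC (s : ℕ) (c : Fin s → ℝ) : Fin s → ℂ :=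
  fun i => (collocB s c i : ℂ)

/-- The linear stability function `R(λ) = 1 + λ bᵀ (I - λ A)⁻¹ 𝟙`. -/
def stabR (s : ℕ) (c : Fin s → ℝ) (lam : ℂ) : ℂ :=
  1 + lam * (collocBC s c ⬝ᵥ ((1 - lam • collocAC s c)⁻¹ *ᵥ (fun _ => 1)))

/-- A-stability: `|R(λ)| ≤ 1` on the closed left half-plane (where defined). -/
def AStable (s : ℕ) (c : Fin s → ℝ) : Prop :=
  ∀ lam : ℂ, lam.re ≤ 0 → IsUnit (1 - lam • collocAC s c).det →
    ‖stabR s c lam‖ ≤ 1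

/-- I-stability: `|R(λ)| ≤ 1` on the imaginary axis (where defined). -/
def IStable (s : ℕ) (c : Fin s → ℝ) : Prop :=
  ∀ lam : ℂ, lam.re = 0 → IsUnit (1 - lam • collocAC s c).det →
    ‖stabR s c lam‖ ≤ 1

/-- AS-stability: `I - λA` invertible on `ℂ⁻` and `λ bᵀ (I - λA)⁻¹` uniformly bounded there. -/
def ASStable (s : ℕ) (c : Fin s → ℝ) : Prop :=
  (∀ lam : ℂ, lam.re ≤ 0 → IsUnit (1 - lam • collocAC s c).det) ∧
  ∃ M : ℝ, ∀ lam : ℂ, lam.re ≤ 0 → ∀ j,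
    ‖lam * (collocBC s c ᵥ* (1 - lam • collocAC s c)⁻¹) j‖ ≤ M

/-- ASI-stability: `I - λA` invertible on `ℂ⁻` and `(I - λA)⁻¹` uniformly bounded there. -/
def ASIStable (s : ℕ) (c : Fin s → ℝ) : Prop :=
  (∀ lam : ℂ, lam.re ≤ 0 → IsUnit (1 - lam • collocAC s c).det) ∧
  ∃ M : ℝ, ∀ lam : ℂ, lam.re ≤ 0 → ∀ i j,
    ‖(1 - lam • collocAC s c)⁻¹ i j‖ ≤ M

/-- IS-stability: `I - λA` invertible on `iℝ` and `λ bᵀ (I - λA)⁻¹` uniformly bounded there. -/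
def ISStable (s : ℕ) (c : Fin s → ℝ) : Prop :=
  (∀ lam : ℂ, lam.re = 0 → IsUnit (1 - lam • collocAC s c).det) ∧
  ∃ M : ℝ, ∀ lam : ℂ, lam.re = 0 → ∀ j,
    ‖lam * (collocBC s c ᵥ* (1 - lam • collocAC s c)⁻¹) j‖ ≤ M

/-- ISI-stability: `I - λA` invertible on `iℝ` and `(I - λA)⁻¹` uniformly bounded there. -/
def ISIStable (s : ℕ) (c : Fin s → ℝ) : Prop :=
  (∀ lam : ℂ, lam.re = 0 → IsUnit (1 - lam • collocAC s c).det) ∧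
  ∃ M : ℝ, ∀ lam : ℂ, lam.re = 0 → ∀ i j,
    ‖(1 - lam • collocAC s c)⁻¹ i j‖ ≤ M

end


/-!
Through its values at the nodes, a vector `v ∈ ℂ^s` is a polynomial `p` of degree `< s`, and `A v`
is the vector of values of the antiderivative `q` of `p` with `q(0) = 0`. If `A v = μ v`, then
`q - μ q'` has degree `≤ s` and vanishes at the nodes, so it equals `κ π`. Iterating gives
`q = κ ∑ μ^k π^{(k)}`, and at `0` this reads `0 = κ τ(π)(μ)`. So when `τ(π)(μ) ≠ 0`, `κ = 0`, and
`q = μ q'` forces `q = 0`, i.e. `v = 0`: `A` has no eigenvalue on `iℝ`.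

Then `λ (I - λA)⁻¹ = -(A - λ⁻¹ I)⁻¹` is continuous on `iℝ` and tends to `-A⁻¹` at infinity, hence is
bounded. Both `λ bᵀ (I - λA)⁻¹` and `(I - λA)⁻¹ = I + A λ (I - λA)⁻¹` are therefore bounded too.
-/

open Finset
open scoped Nat

namespace Polynomial

section Antiderivative

variable {K : Type*} [Field K]

noncomputable def antiderivative (p : K[X]) : K[X] :=
  p.sum fun k a => C (a / (k + 1)) * X ^ (k + 1)

theorem derivative_antiderivative [CharZero K] (p : K[X]) : derivative (antiderivative p) = p := by
  conv_rhs => rw [p.as_sum_support_C_mul_X_pow]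
  rw [antiderivative, Polynomial.sum_def, derivative_sum]
  refine Finset.sum_congr rfl fun k _ => ?_
  rw [derivative_C_mul_X_pow, Nat.add_sub_cancel]
  congr 2
  push_cast
  field_simp

theorem eval_antiderivative (p : K[X]) {N : ℕ} (hN : p.natDegree < N) (x : K) :
    (antiderivative p).eval x = ∑ k ∈ range N, p.coeff k / (k + 1) * x ^ (k + 1) := by
  rw [antiderivative, p.sum_over_range' (by simp) N hN, eval_finsetSum]
  simp

theorem eval_zero_antiderivative (p : K[X]) : (antiderivative p).eval 0 = 0 := by
  simp [eval_antiderivative p p.natDegree.lt_succ_self]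

theorem natDegree_antiderivative_le (p : K[X]) :
    (antiderivative p).natDegree ≤ p.natDegree + 1 := by
  rw [antiderivative, p.sum_over_range' (by simp) _ (Nat.lt_succ_self _)]
  refine natDegree_sum_le_of_forall_le _ _ fun k hk => ?_
  refine (natDegree_C_mul_X_pow_le _ _).trans ?_
  simpa using Finset.mem_range.mp hk

end Antiderivative

section IterateDerivative

variable {R : Type*} [CommRing R]

theorem eq_sum_iterate_derivative_of_eq_C_mul_derivative_add {q r : R[X]} {μ : R}
    (h : q = C μ * derivative q + r) {N : ℕ} (hN : q.natDegree < N) :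
    q = ∑ k ∈ range N, C μ ^ k * derivative^[k] r := by
  have hr : r = q - C μ * derivative q := eq_sub_of_add_eq' h.symm
  have hstep : ∀ k, C μ ^ k * derivative^[k] r =
      C μ ^ k * derivative^[k] q - C μ ^ (k + 1) * derivative^[k + 1] q := by
    intro k
    rw [hr, iterate_derivative_sub, iterate_derivative_C_mul, Function.iterate_succ_apply]
    ring
  simp_rw [hstep]
  rw [Finset.sum_range_sub', iterate_derivative_eq_zero hN]
  simp

theorem eval_zero_iterate_derivative (f : R[X]) (k : ℕ) :
    (derivative^[k] f).eval 0 = k ! * f.coeff k := by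
  rw [← coeff_zero_eq_eval_zero, coeff_iterate_derivative, zero_add, Nat.descFactorial_self,
    nsmul_eq_mul]

theorem eval_zero_eq_sum_of_eq_C_mul_derivative_add {q r : R[X]} {μ : R}
    (h : q = C μ * derivative q + r) {N : ℕ} (hN : q.natDegree < N) :
    q.eval 0 = ∑ k ∈ range N, μ ^ k * k ! * r.coeff k := by
  conv_lhs => rw [eq_sum_iterate_derivative_of_eq_C_mul_derivative_add h hN]
  simp only [eval_finsetSum, eval_mul, eval_pow, eval_C, eval_zero_iterate_derivative, mul_assoc]

theorem eq_zero_of_eq_C_mul_derivative {q : R[X]} {μ : R}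
    (h : q = C μ * derivative q) : q = 0 := by
  rw [eq_sum_iterate_derivative_of_eq_C_mul_derivative_add (r := 0) (by rwa [add_zero])
    q.natDegree.lt_succ_self]
  simp

end IterateDerivative

theorem eq_C_mul_prod_X_sub_C_of_eval_eq_zero {K : Type*} [Field K] {n : ℕ} {x : Fin n → K}
    (hx : Function.Injective x) {r : K[X]} (hr : r.natDegree ≤ n) (h : ∀ i, r.eval (x i) = 0) :
    r = C (r.coeff n) * ∏ i, (X - C (x i)) := by
  have hdeg : (∏ i, (X - C (x i))).natDegree = n := by
    rw [natDegree_prod _ _ fun i _ => X_sub_C_ne_zero _]; simp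
  have hlead : (∏ i, (X - C (x i))).coeff n = 1 := by
    simpa [hdeg] using (monic_prod_of_monic univ _ fun i _ => monic_X_sub_C (x i)).coeff_natDegree
  rw [← sub_eq_zero]
  refine eq_zero_of_degree_lt_of_eval_index_eq_zero univ hx.injOn ?_ fun i _ => ?_
  · rw [card_univ, Fintype.card_fin, degree_lt_iff_coeff_zero]
    intro m hm
    rcases (Nat.cast_le.mp hm).eq_or_lt with rfl | hlt
    · rw [coeff_sub, coeff_C_mul, hlead, mul_one, sub_self]
    · rw [coeff_sub, coeff_C_mul, coeff_eq_zero_of_natDegree_lt (hr.trans_lt hlt),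
        coeff_eq_zero_of_natDegree_lt (hdeg.trans_lt hlt), mul_zero, sub_zero]
  · simp [h i, eval_prod, Finset.prod_eq_zero (Finset.mem_univ i)]

end Polynomial

section Collocation

variable {s : ℕ} {c : Fin s → ℝ}

theorem lagrangeFun_eq_eval_basis (i : Fin s) :
    lagrangeFun s c i = fun t => (Lagrange.basis univ c i).eval t := by
  funext t
  rw [Lagrange.basis, eval_prod, lagrangeFun]
  refine Finset.prod_congr rfl fun j _ => ?_
  simp [Lagrange.basisDivisor, div_eq_inv_mul, mul_comm]

theorem sum_pow_mul_lagrangeFun (hc : Function.Injective c) {k : ℕ} (hk : k < s) (t : ℝ) :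
    ∑ j, c j ^ k * lagrangeFun s c j t = t ^ k := by
  have hdeg : (X ^ k : ℝ[X]).degree < (univ : Finset (Fin s)).card := by
    rw [degree_X_pow, card_univ, Fintype.card_fin]
    exact_mod_cast hk
  have h := congrArg (eval t) (Lagrange.eq_interpolate hc.injOn hdeg)
  simp only [Lagrange.interpolate_apply, eval_finsetSum, eval_mul, eval_C, eval_pow,
    eval_X] at h
  simp only [lagrangeFun_eq_eval_basis, h]

theorem sum_collocA_mul_pow (hc : Function.Injective c) (i : Fin s) {k : ℕ} (hk : k < s) :
    ∑ j, collocA s c i j * c j ^ k = c i ^ (k + 1) / (k + 1) := by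
  have hint : ∀ j, IntervalIntegrable (fun t => c j ^ k * lagrangeFun s c j t) volume 0 (c i) :=
    fun j => (continuous_const.mul (by simpa only [lagrangeFun_eq_eval_basis] using
      (Lagrange.basis univ c j).continuous)).intervalIntegrable _ _
  calc ∑ j, collocA s c i j * c j ^ k
      = ∑ j, ∫ t in (0 : ℝ)..c i, c j ^ k * lagrangeFun s c j t := by
        refine Finset.sum_congr rfl fun j _ => ?_
        rw [collocA, Matrix.of_apply, intervalIntegral.integral_const_mul, mul_comm]
    _ = ∫ t in (0 : ℝ)..c i, t ^ k := by
        rw [← intervalIntegral.integral_finsetSum fun j _ => hint j]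
        simp only [sum_pow_mul_lagrangeFun hc hk]
    _ = c i ^ (k + 1) / (k + 1) := by simp [integral_pow]

theorem collocAC_mulVec_eval (hc : Function.Injective c) {p : ℂ[X]} (hp : p.natDegree < s) :
    collocAC s c *ᵥ (fun j => p.eval (c j : ℂ)) = fun i => (antiderivative p).eval (c i : ℂ) := by
  funext i
  simp only [Matrix.mulVec, dotProduct, collocAC, Matrix.map_apply, eval_eq_sum_range' hp,
    eval_antiderivative p hp, Finset.mul_sum]
  rw [Finset.sum_comm]
  refine Finset.sum_congr rfl fun k hk => ?_
  have h := congrArg (fun x : ℝ => (x : ℂ)) (sum_collocA_mul_pow hc i (Finset.mem_range.mp hk))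
  push_cast at h
  rw [div_mul_eq_mul_div, mul_div_assoc, ← h, Finset.mul_sum]
  refine Finset.sum_congr rfl fun j _ => ?_
  ring

theorem aeval_tauP (p : ℝ[X]) {N : ℕ} (hN : p.natDegree < N) (z : ℂ) :
    aeval z (tauP p) = ∑ k ∈ range N, z ^ k * k ! * (p.coeff k : ℂ) := by
  rw [tauP, ← Polynomial.sum_def (f := fun k a => C ((k ! : ℝ) * a) * X ^ k),
    p.sum_over_range' (by simp) N hN, map_sum]
  refine Finset.sum_congr rfl fun k _ => ?_
  simp only [map_mul, aeval_C, aeval_X_pow, Complex.coe_algebraMap]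
  push_cast
  ring

theorem natDegree_piPoly : (piPoly s c).natDegree = s := by
  rw [piPoly, natDegree_prod _ _ fun i _ => X_sub_C_ne_zero (c i)]
  simp

theorem map_piPoly : (piPoly s c).map (algebraMap ℝ ℂ) = ∏ i, (X - C (c i : ℂ)) := by
  simp [piPoly, Polynomial.map_prod]


theorem exists_antiderivative_sub_eq_C_mul_piPoly (hc : Function.Injective c) {μ : ℂ}
    {p : ℂ[X]} (hp : p.natDegree < s)
    (hv : collocAC s c *ᵥ (fun j => p.eval (c j : ℂ)) = μ • fun j => p.eval (c j : ℂ)) :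
    ∃ κ : ℂ, antiderivative p - C μ * p = C κ * (piPoly s c).map (algebraMap ℝ ℂ) := by
  refine ⟨_, map_piPoly ▸ eq_C_mul_prod_X_sub_C_of_eval_eq_zero
    (Complex.ofReal_injective.comp hc) ?_ fun i => ?_⟩
  · refine (natDegree_sub_le _ _).trans (max_le ?_ ((natDegree_C_mul_le _ _).trans hp.le))
    exact (natDegree_antiderivative_le p).trans hp
  · have h := congrFun hv i
    rw [collocAC_mulVec_eval hc hp, Pi.smul_apply, smul_eq_mul] at h
    simp [h]

theorem eq_zero_of_collocAC_mulVec_eval_eq_smul (hc : Function.Injective c) {μ : ℂ}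
    (hμ : aeval μ (tauP (piPoly s c)) ≠ 0) {p : ℂ[X]} (hp : p.natDegree < s)
    (hv : collocAC s c *ᵥ (fun j => p.eval (c j : ℂ)) = μ • fun j => p.eval (c j : ℂ)) :
    p = 0 := by
  obtain ⟨κ, hκ⟩ := exists_antiderivative_sub_eq_C_mul_piPoly hc hp hv
  set q := antiderivative p
  have hdq : derivative q = p := derivative_antiderivative p
  have hq : q.natDegree < s + 1 := (natDegree_antiderivative_le p).trans_lt (by omega)
  have hqr : q = C μ * derivative q + C κ * (piPoly s c).map (algebraMap ℝ ℂ) := by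
    rw [hdq, ← hκ]; ring
  have hκτ : κ * aeval μ (tauP (piPoly s c)) = 0 := by
    rw [aeval_tauP _ (natDegree_piPoly.trans_lt s.lt_succ_self), Finset.mul_sum,
      ← eval_zero_antiderivative p, eval_zero_eq_sum_of_eq_C_mul_derivative_add hqr hq]
    refine Finset.sum_congr rfl fun k _ => ?_
    rw [coeff_C_mul, coeff_map, Complex.coe_algebraMap]
    ring
  rw [(mul_eq_zero.mp hκτ).resolve_right hμ, C_0, zero_mul, add_zero] at hqr
  rw [← hdq, eq_zero_of_eq_C_mul_derivative hqr, derivative_zero]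

theorem eq_zero_of_collocAC_mulVec_eq_smul (hc : Function.Injective c) {μ : ℂ}
    (hμ : aeval μ (tauP (piPoly s c)) ≠ 0) {v : Fin s → ℂ}
    (hv : collocAC s c *ᵥ v = μ • v) : v = 0 := by
  rcases Nat.eq_zero_or_pos s with rfl | hs
  · exact Subsingleton.elim _ _
  have hcC : Set.InjOn (fun j => (c j : ℂ)) (univ : Finset (Fin s)) :=
    (Complex.ofReal_injective.comp hc).injOn
  set p := Lagrange.interpolate univ (fun j => (c j : ℂ)) v
  have hpv : (fun j => p.eval (c j : ℂ)) = v :=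
    funext fun j => Lagrange.eval_interpolate_at_node _ hcC (mem_univ j)
  have hp : p.natDegree < s := by
    have h : p.natDegree ≤ #(univ : Finset (Fin s)) - 1 :=
      natDegree_le_of_degree_le (Lagrange.degree_interpolate_le v hcC)
    rw [card_univ, Fintype.card_fin] at h
    omega
  rw [← hpv] at hv ⊢
  rw [eq_zero_of_collocAC_mulVec_eval_eq_smul hc hμ hp hv]
  simp only [eval_zero]
  rfl

theorem det_collocAC_sub_smul_ne_zero (hc : Function.Injective c) {μ : ℂ}
    (hμ : aeval μ (tauP (piPoly s c)) ≠ 0) : (collocAC s c - μ • 1).det ≠ 0 := by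
  intro hdet
  obtain ⟨v, hv0, hv⟩ := Matrix.exists_mulVec_eq_zero_iff.mpr hdet
  refine hv0 (eq_zero_of_collocAC_mulVec_eq_smul hc hμ ?_)
  rwa [Matrix.sub_mulVec, Matrix.smul_mulVec, Matrix.one_mulVec, sub_eq_zero] at hv

end Collocation

namespace Matrix

open Filter Topology Bornology Complex

variable {n : Type*} [Fintype n] [DecidableEq n]

section Field

variable {K : Type*} [Field K]

omit [Fintype n] in
theorem one_sub_smul_eq_neg_smul_sub (A : Matrix n n K) {z : K} (hz : z ≠ 0) :
    1 - z • A = (-z) • (A - z⁻¹ • 1) := by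
  rw [smul_sub, smul_smul, neg_mul, mul_inv_cancel₀ hz, neg_smul, neg_smul, one_smul]
  abel

theorem smul_inv_one_sub_smul {A : Matrix n n K} {z : K} (hz : z ≠ 0)
    (h : IsUnit (A - z⁻¹ • 1).det) :
    z • (1 - z • A)⁻¹ = -(A - z⁻¹ • 1)⁻¹ := by
  have hinv : (1 - z • A)⁻¹ = (-z)⁻¹ • (A - z⁻¹ • 1)⁻¹ := by
    refine inv_eq_left_inv ?_
    rw [A.one_sub_smul_eq_neg_smul_sub hz, Matrix.smul_mul, Matrix.mul_smul, nonsing_inv_mul _ h,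
      smul_smul,
      inv_mul_cancel₀ (neg_ne_zero.mpr hz), one_smul]
  rw [hinv, smul_smul, inv_neg, mul_neg, mul_inv_cancel₀ hz, neg_smul, one_smul]

end Field

theorem continuousAt_inv_of_det_ne_zero {𝕜 : Type*} [NormedField 𝕜] {B : Matrix n n 𝕜}
    (h : B.det ≠ 0) : ContinuousAt Inv.inv B :=
  continuousAt_matrix_inv B (by simpa only [Ring.inverse_eq_inv'] using continuousAt_inv₀ h)

omit [DecidableEq n] in
theorem exists_bound_of_continuous_of_tendsto_cocompact {m D E : Type*} [Fintype m]
    [TopologicalSpace D] [SeminormedAddCommGroup E] {F : D → Matrix m n E} {L : Matrix m n E}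
    (hF : Continuous F) (hL : Tendsto F (cocompact D) (𝓝 L)) :
    ∃ M, ∀ x i j, ‖F x i j‖ ≤ M := by
  set G : D → m → n → E := fun x i j => F x i j
  have hGc : Continuous G := continuous_pi fun i => continuous_pi fun j => hF.matrix_elem i j
  have hGL : Tendsto G (cocompact D) (𝓝 fun i j => L i j) :=
    tendsto_pi_nhds.mpr fun i => tendsto_pi_nhds.mpr fun j =>
      ((continuous_apply j).comp (continuous_apply i) : Continuous fun B : Matrix m n E => B i j)
        |>.tendsto L |>.comp hL
  have hG : IsBounded (Set.range G) := hGc.isBounded_range_iff_isBigO.mpr (hGL.isBigO_one ℝ)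
  obtain ⟨M, hM⟩ := isBounded_iff_forall_norm_le.mp hG
  exact ⟨M, fun x i j => ((norm_le_pi_norm (G x i) j).trans (norm_le_pi_norm (G x) i)).trans
    (hM _ (Set.mem_range_self x))⟩

variable {A : Matrix n n ℂ} (hA : ∀ μ : ℂ, μ.re = 0 → (A - μ • 1).det ≠ 0)
include hA

theorem det_one_sub_smul_ne_zero {z : ℂ} (hz : z.re = 0) : (1 - z • A).det ≠ 0 := by
  rcases eq_or_ne z 0 with rfl | hz0
  · simp
  rw [A.one_sub_smul_eq_neg_smul_sub hz0, det_smul]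
  exact mul_ne_zero (pow_ne_zero _ (neg_ne_zero.mpr hz0)) (hA _ (by simp [inv_re, hz]))

theorem continuous_smul_inv_one_sub_smul_mul_I :
    Continuous fun t : ℝ => ((t : ℂ) * I) • (1 - ((t : ℂ) * I) • A)⁻¹ := by
  have hline : Continuous fun t : ℝ => (t : ℂ) * I := continuous_ofReal.mul continuous_const
  refine hline.smul (continuous_iff_continuousAt.mpr fun t => ?_)
  refine (continuousAt_inv_of_det_ne_zero (det_one_sub_smul_ne_zero hA (by simp))).comp
    (f := fun t : ℝ => 1 - ((t : ℂ) * I) • A)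
    (continuous_const.sub (hline.smul continuous_const)).continuousAt

theorem tendsto_smul_inv_one_sub_smul_mul_I :
    Tendsto (fun t : ℝ => ((t : ℂ) * I) • (1 - ((t : ℂ) * I) • A)⁻¹) (cocompact ℝ)
      (𝓝 (-A⁻¹)) := by
  have hinv : Tendsto (fun t : ℝ => ((t : ℂ) * I)⁻¹) (cocompact ℝ) (𝓝 0) :=
    tendsto_inv₀_cobounded.comp <| tendsto_norm_atTop_iff_cobounded.mp <|
      (tendsto_norm_cocompact_atTop (E := ℝ)).congr fun t => by simp
  have hres : ContinuousAt (fun μ : ℂ => -(A - μ • 1)⁻¹) 0 :=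
    ((continuousAt_inv_of_det_ne_zero (by simpa using hA 0 rfl)).comp
      (f := fun μ : ℂ => A - μ • 1)
      (continuous_const.sub (continuous_id.smul continuous_const)).continuousAt).neg
  have h0 : Tendsto (fun t : ℝ => -(A - ((t : ℂ) * I)⁻¹ • 1)⁻¹) (cocompact ℝ) (𝓝 (-A⁻¹)) := by
    simpa only [Function.comp_def, zero_smul, sub_zero] using hres.tendsto.comp hinv
  refine h0.congr' ?_
  filter_upwards [(isCompact_singleton (x := (0 : ℝ))).compl_mem_cocompact] with t ht
  have ht0 : (t : ℂ) * I ≠ 0 := mul_ne_zero (ofReal_ne_zero.mpr ht) I_ne_zero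
  exact (smul_inv_one_sub_smul ht0 (hA _ (by simp [inv_re])).isUnit).symm

theorem exists_bound_smul_inv_one_sub_smul :
    ∃ M, ∀ z : ℂ, z.re = 0 → ∀ i j, ‖(z • (1 - z • A)⁻¹) i j‖ ≤ M := by
  obtain ⟨M, hM⟩ := exists_bound_of_continuous_of_tendsto_cocompact
    (continuous_smul_inv_one_sub_smul_mul_I hA) (tendsto_smul_inv_one_sub_smul_mul_I hA)
  refine ⟨M, fun z hz => ?_⟩
  obtain ⟨t, rfl⟩ : ∃ t : ℝ, z = t * I := ⟨z.im, Complex.ext (by simp [hz]) (by simp)⟩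
  exact hM t

theorem exists_bound_smul_vecMul_inv_one_sub_smul (b : n → ℂ) :
    ∃ M, ∀ z : ℂ, z.re = 0 → ∀ j, ‖z * (b ᵥ* (1 - z • A)⁻¹) j‖ ≤ M := by
  obtain ⟨M, hM⟩ := exists_bound_smul_inv_one_sub_smul hA
  refine ⟨∑ i, ‖b i‖ * M, fun z hz j => ?_⟩
  calc ‖z * (b ᵥ* (1 - z • A)⁻¹) j‖ = ‖(b ᵥ* (z • (1 - z • A)⁻¹)) j‖ := by
        rw [vecMul_smul, Pi.smul_apply, smul_eq_mul]
    _ = ‖∑ i, b i * (z • (1 - z • A)⁻¹) i j‖ := rfl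
    _ ≤ ∑ i, ‖b i‖ * M := (norm_sum_le _ _).trans <| Finset.sum_le_sum fun i _ => by
        rw [norm_mul]; exact mul_le_mul_of_nonneg_left (hM z hz i j) (norm_nonneg _)

theorem exists_bound_inv_one_sub_smul :
    ∃ M, ∀ z : ℂ, z.re = 0 → ∀ i j, ‖(1 - z • A)⁻¹ i j‖ ≤ M := by
  obtain ⟨M, hM⟩ := exists_bound_smul_inv_one_sub_smul hA
  refine ⟨1 + ∑ i, ∑ k, ‖A i k‖ * M, fun z hz i j => ?_⟩
  have hM0 : 0 ≤ M := (norm_nonneg _).trans (hM z hz i j)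
  have hres : (1 - z • A)⁻¹ = 1 + A * (z • (1 - z • A)⁻¹) := by
    have h := mul_nonsing_inv _ (det_one_sub_smul_ne_zero hA hz).isUnit
    rwa [sub_mul, one_mul, sub_eq_iff_eq_add', Matrix.smul_mul, ← Matrix.mul_smul,
      add_comm] at h
  calc ‖(1 - z • A)⁻¹ i j‖
        = ‖(1 : Matrix n n ℂ) i j + (A * (z • (1 - z • A)⁻¹)) i j‖ := by
          rw [← add_apply, ← hres]
    _ ≤ 1 + ∑ k, ‖A i k‖ * M := by
        refine (norm_add_le _ _).trans (add_le_add ?_ ?_)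
        · rw [one_apply]; split_ifs <;> simp
        · rw [mul_apply]
          refine (norm_sum_le _ _).trans (Finset.sum_le_sum fun k _ => ?_)
          rw [norm_mul]; exact mul_le_mul_of_nonneg_left (hM z hz k j) (norm_nonneg _)
    _ ≤ 1 + ∑ i, ∑ k, ‖A i k‖ * M := by
        refine add_le_add_right ?_ 1
        exact Finset.single_le_sum (f := fun i => ∑ k, ‖A i k‖ * M)
          (fun i _ => Finset.sum_nonneg fun k _ => by positivity) (Finset.mem_univ i)

end Matrix

theorem IStable_of_no_root_hatI_general (s : ℕ) (c : Fin s → ℝ) (hc : StrictMono c)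
    (hI : IStable s c)
    (hroot : ∀ z : ℂ, z.re = 0 → Polynomial.aeval z (tauP (piPoly s c)) ≠ 0) :
    IStable s c ∧ ISStable s c ∧ ISIStable s c := by
  have hA : ∀ μ : ℂ, μ.re = 0 → (collocAC s c - μ • 1).det ≠ 0 := fun μ hμ =>
    det_collocAC_sub_smul_ne_zero hc.injective (hroot μ hμ)
  have hunit : ∀ z : ℂ, z.re = 0 → IsUnit (1 - z • collocAC s c).det := fun z hz =>
    (Matrix.det_one_sub_smul_ne_zero hA hz).isUnit
  exact ⟨hI, ⟨hunit, Matrix.exists_bound_smul_vecMul_inv_one_sub_smul hA _⟩,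
    ⟨hunit, Matrix.exists_bound_inv_one_sub_smul hA⟩⟩

/-- an `I`-stable collocation method such that `τ(π)` has no root on `iℝ`
is `Î`-stable (i.e. `I`-, `IS`- and `ISI`-stable). -/
theorem IStable_of_no_root_hatI (s : ℕ) (hs : 1 ≤ s) (c : Fin s → ℝ) (hc : StrictMono c)
    (hI : IStable s c)
    (hroot : ∀ z : ℂ, z.re = 0 → Polynomial.aeval z (tauP (piPoly s c)) ≠ 0) :
    IStable s c ∧ ISStable s c ∧ ISIStable s c :=
  IStable_of_no_root_hatI_general s c hc hI hroot
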